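/- arXiv:1711.09328 — 4 statements merged into one kernel-verified Lean document; each statement's English description precedes it below -/
import Mathlib

section
/- With T, p, 0 as above and 𝔾 = (G ⇉ M) a groupoid object in 𝕏 such that T preserves the composability pullback, the arrow (π₀ ≫ 0_G, π₁ ≫ ι^s) ≫ Tμ : G ₜ×_{π^s} T^s G → TG factors (uniquely) through the monomorphism ι^s : T^s G → TG; i.e. there is μ^s : G ₜ×_{π^s} T^s G → T^s G with μ^s ≫ ι^s = (π₀ ≫ 0, π₁ ≫ ι^s) ≫ Tμ. -/
open CategoryTheory

/-- For a groupoid object `G ⇉ M` with source `s`, target `t`, composition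
`μ : D ⟶ G` (where `D = G ₜ×ₛ G` is the composability pullback, preserved by `T`),
the arrow `(π₀ ≫ 0_G, π₁ ≫ ι^s) ≫ Tμ : G ₜ×_{π^s} T^s G ⟶ TG` factors uniquely through
the mono `ι^s : T^s G ⟶ TG`.  Here the pairing is any `k : P ⟶ T(D)` with the indicated
components. -/
theorem stmt2 {C : Type*} [Category C] (T : C ⥤ C)
    (p : T ⟶ 𝟭 C) (z : 𝟭 C ⟶ T) (hz : z ≫ p = 𝟙 (𝟭 C))
    (G M : C) (s t : G ⟶ M)
    -- the composability pullback D = G ₜ×ₛ G with composition μ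
    (D : C) (d0 d1 : D ⟶ G) (hD : IsPullback d0 d1 t s)
    (μ : D ⟶ G) (hμs : μ ≫ s = d0 ≫ s)
    -- T preserves the composability pullback
    (hTD : IsPullback (T.map d0) (T.map d1) (T.map t) (T.map s))
    -- T^s G, the pullback of Ts along 0
    (TsG : C) (ιs : TsG ⟶ T.obj G) (πs : TsG ⟶ M)
    (hTs : IsPullback ιs πs (T.map s) (z.app M))
    -- P = G ₜ×_{π^s} T^s G
    (P : C) (π0 : P ⟶ G) (π1 : P ⟶ TsG) (hP : IsPullback π0 π1 t πs) :
    ∀ k : P ⟶ T.obj D,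
      k ≫ T.map d0 = π0 ≫ z.app G →
      k ≫ T.map d1 = π1 ≫ ιs →
      ∃! μs : P ⟶ TsG, μs ≫ ιs = k ≫ T.map μ := by
  intro k hk0 hk1
  have hret : z.app M ≫ p.app M = 𝟙 M := by
    have := congrArg (fun n => n.app M) hz
    simpa using this
  have hmonoz : Mono (z.app M) := ⟨fun f g h => by
    have h2 := congrArg (fun x => x ≫ p.app M) h
    simpa [hret] using h2⟩
  have hmono : Mono ιs :=
    Limits.PullbackCone.mono_fst_of_is_pullback_of_mono hTs.isLimit
  have hw : (k ≫ T.map μ) ≫ T.map s = (π0 ≫ s) ≫ z.app M := by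
    have hnat : z.app G ≫ T.map s = s ≫ z.app M := (z.naturality s).symm
    calc (k ≫ T.map μ) ≫ T.map s = k ≫ T.map (μ ≫ s) := by
            rw [Category.assoc, T.map_comp]
      _ = k ≫ T.map (d0 ≫ s) := by rw [hμs]
      _ = (k ≫ T.map d0) ≫ T.map s := by rw [T.map_comp, Category.assoc]
      _ = π0 ≫ (z.app G ≫ T.map s) := by rw [hk0, Category.assoc]
      _ = (π0 ≫ s) ≫ z.app M := by rw [hnat, Category.assoc]
  refine ⟨hTs.lift (k ≫ T.map μ) (π0 ≫ s) hw, hTs.lift_fst _ _ _, ?_⟩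
  intro y hy
  have := hTs.lift_fst (k ≫ T.map μ) (π0 ≫ s) hw
  exact (cancel_mono ιs).mp (by rw [hy, this])
end

section
/- The restriction map (−)^∨ : {sections of π^s_M} → {left invariant vector fields on G} and the extension map (−)^∧ are mutually inverse bijections. Concretely: for every section v of π^s_M, (v^∧)^∨ = v, and for every left invariant vector field X, (X^∨)^∧ = X. -/
open CategoryTheory

/-- Restriction `(−)^∨` and extension `(−)^∧` are mutually inverse:
for every section `v` of `π^s_M` we have `(v^∧)^∨ = v`, and for every left invariant
vector field `X` we have `(X^∨)^∧ = X`. -/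
theorem stmt6 {C : Type*} [Category C] (T : C ⥤ C)
    (p : T ⟶ 𝟭 C) (z : 𝟭 C ⟶ T) (hz : z ≫ p = 𝟙 (𝟭 C))
    (G M : C) (s t : G ⟶ M) (e : M ⟶ G)
    (hes : e ≫ s = 𝟙 M) (het : e ≫ t = 𝟙 M)
    (D : C) (d0 d1 : D ⟶ G) (hD : IsPullback d0 d1 t s)
    (μ : D ⟶ G) (hμ0 : μ ≫ s = d0 ≫ s) (hμ1 : μ ≫ t = d1 ≫ t)
    (hunitR : ∀ {W : C} (x : W ⟶ G) (u : W ⟶ D),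
      u ≫ d0 = x → u ≫ d1 = x ≫ t ≫ e → u ≫ μ = x)
    (hunitL : ∀ {W : C} (x : W ⟶ G) (u : W ⟶ D),
      u ≫ d0 = x ≫ s ≫ e → u ≫ d1 = x → u ≫ μ = x)
    (hTD : IsPullback (T.map d0) (T.map d1) (T.map t) (T.map s))
    (TsG : C) (ιs : TsG ⟶ T.obj G) (πs : TsG ⟶ M)
    (hTs : IsPullback ιs πs (T.map s) (z.app M))
    (TsMG : C) (ιM : TsMG ⟶ TsG) (πsM : TsMG ⟶ M)
    (hM : IsPullback ιM πsM (ιs ≫ p.app G) e)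
    (P : C) (π0 : P ⟶ G) (π1 : P ⟶ TsG) (hP : IsPullback π0 π1 t πs)
    (μs : P ⟶ TsG)
    (hμs : ∀ k : P ⟶ T.obj D,
      k ≫ T.map d0 = π0 ≫ z.app G → k ≫ T.map d1 = π1 ≫ ιs →
      μs ≫ ιs = k ≫ T.map μ) :
    -- (v^∧)^∨ = v :
    (∀ (v : M ⟶ TsMG), v ≫ πsM = 𝟙 M →
      ∀ V : G ⟶ TsG,
        (∀ w : G ⟶ P, w ≫ π0 = 𝟙 G → w ≫ π1 = t ≫ v ≫ ιM → V = w ≫ μs) →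
        ∀ rv : M ⟶ TsMG, rv ≫ ιM = e ≫ V → rv = v) ∧
    -- (X^∨)^∧ = X :
    (∀ X : G ⟶ TsG, X ≫ (ιs ≫ p.app G) = 𝟙 G →
      (∀ L : D ⟶ P, L ≫ π0 = d0 → L ≫ π1 = d1 ≫ X → L ≫ μs = μ ≫ X) →
      ∀ rX : M ⟶ TsMG, rX ≫ ιM = e ≫ X →
        ∀ V : G ⟶ TsG,
          (∀ w : G ⟶ P, w ≫ π0 = 𝟙 G → w ≫ π1 = t ≫ rX ≫ ιM → V = w ≫ μs) →
          V = X) := by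
  -- z is a (split) mono pointwise
  have hzp : ∀ A : C, z.app A ≫ p.app A = 𝟙 A := by
    intro A
    have := congrArg (fun η => η.app A) hz
    simpa using this
  -- `πs = ιs ≫ p.app G ≫ s`
  have hπs : ιs ≫ p.app G ≫ s = πs := by
    have h1 : ιs ≫ T.map s = πs ≫ z.app M := hTs.w
    have h2 : T.map s ≫ p.app M = p.app G ≫ s := by simpa using p.naturality s
    calc ιs ≫ p.app G ≫ s = ιs ≫ T.map s ≫ p.app M := by rw [h2]
      _ = (ιs ≫ T.map s) ≫ p.app M := by simp
      _ = πs ≫ z.app M ≫ p.app M := by rw [h1]; simp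
      _ = πs := by rw [hzp]; simp
  -- ιs is mono
  have ιs_mono : ∀ {W : C} (a b : W ⟶ TsG), a ≫ ιs = b ≫ ιs → a = b := by
    intro W a b h
    refine hTs.hom_ext h ?_
    have h1 := congrArg (fun m => m ≫ p.app G ≫ s) h
    simpa only [Category.assoc, hπs] using h1
  -- ιM is mono
  have ιM_mono : ∀ {W : C} (a b : W ⟶ TsMG), a ≫ ιM = b ≫ ιM → a = b := by
    intro W a b h
    refine hM.hom_ext h ?_
    have h1 : a ≫ πsM ≫ e = b ≫ πsM ≫ e := by
      rw [← hM.w]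
      simp only [← Category.assoc]
      rw [h]
    have h2 := congrArg (fun m => m ≫ s) h1
    simpa only [Category.assoc, hes, Category.comp_id] using h2
  -- `ιM ≫ πs = πsM`
  have hιMπs : ιM ≫ πs = πsM := by
    calc ιM ≫ πs = ιM ≫ ιs ≫ p.app G ≫ s := by rw [hπs]
      _ = (ιM ≫ (ιs ≫ p.app G)) ≫ s := by simp
      _ = (πsM ≫ e) ≫ s := by rw [hM.w]
      _ = πsM := by simp [hes]
  -- the right unit `ρ : G ⟶ D`, pairing `(g, e t g)`
  have hρw : (𝟙 G) ≫ t = (t ≫ e) ≫ s := by simp [hes]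
  set ρ : G ⟶ D := hD.lift (𝟙 G) (t ≫ e) hρw with hρ
  have hρ0 : ρ ≫ d0 = 𝟙 G := hD.lift_fst _ _ _
  have hρ1 : ρ ≫ d1 = t ≫ e := hD.lift_snd _ _ _
  have hρμ : ρ ≫ μ = 𝟙 G := hunitR (𝟙 G) ρ hρ0 (by simpa using hρ1)
  -- the left unit `lam : G ⟶ D`, pairing `(e s g, g)`
  have hlamw : (s ≫ e) ≫ t = (𝟙 G) ≫ s := by simp [het]
  set lam : G ⟶ D := hD.lift (s ≫ e) (𝟙 G) hlamw with hlam
  have hlam0 : lam ≫ d0 = s ≫ e := hD.lift_fst _ _ _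
  have hlam1 : lam ≫ d1 = 𝟙 G := hD.lift_snd _ _ _
  have hlamμ : lam ≫ μ = 𝟙 G := hunitL (𝟙 G) lam (by simpa using hlam0) hlam1
  -- the canonical `k : P ⟶ T D`
  have hkw : (π0 ≫ z.app G) ≫ T.map t = (π1 ≫ ιs) ≫ T.map s := by
    have hn : z.app G ≫ T.map t = t ≫ z.app M := by simpa using (z.naturality t).symm
    calc (π0 ≫ z.app G) ≫ T.map t = π0 ≫ z.app G ≫ T.map t := by simp
      _ = π0 ≫ t ≫ z.app M := by rw [hn]
      _ = (π0 ≫ t) ≫ z.app M := by simp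
      _ = (π1 ≫ πs) ≫ z.app M := by rw [hP.w]
      _ = π1 ≫ πs ≫ z.app M := by simp
      _ = π1 ≫ ιs ≫ T.map s := by rw [hTs.w]
      _ = (π1 ≫ ιs) ≫ T.map s := by simp
  set k : P ⟶ T.obj D := hTD.lift (π0 ≫ z.app G) (π1 ≫ ιs) hkw with hk
  have hk0 : k ≫ T.map d0 = π0 ≫ z.app G := hTD.lift_fst _ _ _
  have hk1 : k ≫ T.map d1 = π1 ≫ ιs := hTD.lift_snd _ _ _
  have hμsιs : μs ≫ ιs = k ≫ T.map μ := hμs k hk0 hk1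
  constructor
  · -- (v^∧)^∨ = v
    intro v hv V hV rv hrv
    have hww : (𝟙 G) ≫ t = (t ≫ v ≫ ιM) ≫ πs := by
      calc (𝟙 G) ≫ t = t := by simp
        _ = t ≫ v ≫ πsM := by rw [hv]; simp
        _ = (t ≫ v ≫ ιM) ≫ πs := by rw [Category.assoc, Category.assoc, hιMπs]
    set w : G ⟶ P := hP.lift (𝟙 G) (t ≫ v ≫ ιM) hww with hw
    have hw0 : w ≫ π0 = 𝟙 G := hP.lift_fst _ _ _
    have hw1 : w ≫ π1 = t ≫ v ≫ ιM := hP.lift_snd _ _ _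
    have hVw : V = w ≫ μs := hV w hw0 hw1
    -- y := v ≫ ιM ≫ ιs
    have hk' : e ≫ w ≫ k = (v ≫ ιM ≫ ιs) ≫ T.map lam := by
      refine hTD.hom_ext ?_ ?_
      · -- both equal z.app M ≫ T.map e
        have hne : e ≫ z.app G = z.app M ≫ T.map e := by simpa using z.naturality e
        have hys : (v ≫ ιM ≫ ιs) ≫ T.map s = z.app M := by
          calc (v ≫ ιM ≫ ιs) ≫ T.map s = v ≫ ιM ≫ ιs ≫ T.map s := by simp
            _ = v ≫ ιM ≫ πs ≫ z.app M := by rw [hTs.w]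
            _ = v ≫ (ιM ≫ πs) ≫ z.app M := by simp
            _ = v ≫ πsM ≫ z.app M := by rw [hιMπs]
            _ = (v ≫ πsM) ≫ z.app M := by simp
            _ = z.app M := by rw [hv]; simp
        calc (e ≫ w ≫ k) ≫ T.map d0 = e ≫ w ≫ k ≫ T.map d0 := by simp
          _ = e ≫ w ≫ π0 ≫ z.app G := by rw [hk0]
          _ = e ≫ (w ≫ π0) ≫ z.app G := by simp
          _ = e ≫ z.app G := by rw [hw0]; simp
          _ = z.app M ≫ T.map e := hne
          _ = (v ≫ ιM ≫ ιs) ≫ T.map s ≫ T.map e := by rw [← hys]; simp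
          _ = (v ≫ ιM ≫ ιs) ≫ T.map (s ≫ e) := by rw [T.map_comp]
          _ = (v ≫ ιM ≫ ιs) ≫ T.map (lam ≫ d0) := by rw [hlam0]
          _ = ((v ≫ ιM ≫ ιs) ≫ T.map lam) ≫ T.map d0 := by simp
      · calc (e ≫ w ≫ k) ≫ T.map d1 = e ≫ w ≫ k ≫ T.map d1 := by simp
          _ = e ≫ w ≫ π1 ≫ ιs := by rw [hk1]
          _ = e ≫ (w ≫ π1) ≫ ιs := by simp
          _ = e ≫ (t ≫ v ≫ ιM) ≫ ιs := by rw [hw1]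
          _ = (e ≫ t) ≫ v ≫ ιM ≫ ιs := by simp
          _ = v ≫ ιM ≫ ιs := by rw [het]; simp
          _ = (v ≫ ιM ≫ ιs) ≫ T.map (lam ≫ d1) := by rw [hlam1]; simp
          _ = ((v ≫ ιM ≫ ιs) ≫ T.map lam) ≫ T.map d1 := by simp
    have heV : (e ≫ V) ≫ ιs = (v ≫ ιM) ≫ ιs := by
      calc (e ≫ V) ≫ ιs = e ≫ w ≫ μs ≫ ιs := by rw [hVw]; simp
        _ = e ≫ w ≫ k ≫ T.map μ := by rw [hμsιs]
        _ = (e ≫ w ≫ k) ≫ T.map μ := by simp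
        _ = ((v ≫ ιM ≫ ιs) ≫ T.map lam) ≫ T.map μ := by rw [hk']
        _ = (v ≫ ιM ≫ ιs) ≫ T.map (lam ≫ μ) := by rw [T.map_comp]; simp
        _ = (v ≫ ιM ≫ ιs) ≫ T.map (𝟙 G) := by rw [hlamμ]
        _ = (v ≫ ιM) ≫ ιs := by simp
    have : e ≫ V = v ≫ ιM := ιs_mono _ _ heV
    exact ιM_mono _ _ (by rw [hrv, this])
  · -- (X^∨)^∧ = X
    intro X hX hL rX hrX V hV
    have hXπs : X ≫ πs = s := by
      calc X ≫ πs = X ≫ ιs ≫ p.app G ≫ s := by rw [hπs]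
        _ = (X ≫ (ιs ≫ p.app G)) ≫ s := by simp
        _ = s := by rw [hX]; simp
    have hLw : d0 ≫ t = (d1 ≫ X) ≫ πs := by
      rw [Category.assoc, hXπs]; exact hD.w
    set L : D ⟶ P := hP.lift d0 (d1 ≫ X) hLw with hLdef
    have hL0 : L ≫ π0 = d0 := hP.lift_fst _ _ _
    have hL1 : L ≫ π1 = d1 ≫ X := hP.lift_snd _ _ _
    have hLμ : L ≫ μs = μ ≫ X := hL L hL0 hL1
    have h0 : (ρ ≫ L) ≫ π0 = 𝟙 G := by rw [Category.assoc, hL0, hρ0]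
    have h1 : (ρ ≫ L) ≫ π1 = t ≫ rX ≫ ιM := by
      calc (ρ ≫ L) ≫ π1 = ρ ≫ d1 ≫ X := by rw [Category.assoc, hL1]
        _ = (ρ ≫ d1) ≫ X := by simp
        _ = t ≫ e ≫ X := by rw [hρ1]; simp
        _ = t ≫ rX ≫ ιM := by rw [hrX]
    calc V = (ρ ≫ L) ≫ μs := hV (ρ ≫ L) h0 h1
      _ = ρ ≫ μ ≫ X := by rw [Category.assoc, hLμ]
      _ = (ρ ≫ μ) ≫ X := by simp
      _ = X := by rw [hρμ]; simp
end

section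
/- Let (X, α, β, μ) be a pregroupoid in a category 𝕏 with endofunctor T and p : T ⟹ Id, 0 : Id ⟹ T, 0 ≫ p = id, where T preserves the relevant pullbacks. Let T^α X be the pullback of Tα along 0. Then the arrow ξ : X ×_β X ×_α T^α X → X ×_β X ×_α T^α X given by (π₁, π₀, (π₀0, π₁0, π₂ι^α) ≫ Tμ) is an involution: ξ ≫ ξ = id. -/
open CategoryTheory

/-- A triple fibre product `X ×_β X ×_{α,γ} Y`, encoded by its universal property. -/
structure TriplePullback {C : Type*} [Category C] {X Y A B : C}
    (α : X ⟶ A) (β : X ⟶ B) (γ : Y ⟶ A) where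
  pt : C
  p0 : pt ⟶ X
  p1 : pt ⟶ X
  p2 : pt ⟶ Y
  w1 : p0 ≫ β = p1 ≫ β
  w2 : p1 ≫ α = p2 ≫ γ
  lift : ∀ {W : C} (a b : W ⟶ X) (c : W ⟶ Y),
    a ≫ β = b ≫ β → b ≫ α = c ≫ γ → (W ⟶ pt)
  lift_p0 : ∀ {W : C} (a b : W ⟶ X) (c : W ⟶ Y) (h1 : a ≫ β = b ≫ β)
    (h2 : b ≫ α = c ≫ γ), lift a b c h1 h2 ≫ p0 = a
  lift_p1 : ∀ {W : C} (a b : W ⟶ X) (c : W ⟶ Y) (h1 : a ≫ β = b ≫ β)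
    (h2 : b ≫ α = c ≫ γ), lift a b c h1 h2 ≫ p1 = b
  lift_p2 : ∀ {W : C} (a b : W ⟶ X) (c : W ⟶ Y) (h1 : a ≫ β = b ≫ β)
    (h2 : b ≫ α = c ≫ γ), lift a b c h1 h2 ≫ p2 = c
  ext : ∀ {W : C} (m n : W ⟶ pt),
    m ≫ p0 = n ≫ p0 → m ≫ p1 = n ≫ p1 → m ≫ p2 = n ≫ p2 → m = n

/-- For a pregroupoid `(X, α, β, μ)` in a category with endofunctor `T`,
`p : T ⟹ 𝟭`, `0 : 𝟭 ⟹ T`, `0 ≫ p = 𝟙`, with `T` preserving the relevant pullbacks,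
the arrow `ξ = (π₁, π₀, (π₀0, π₁0, π₂ι^α) ≫ Tμ)` on `X ×_β X ×_α T^α X`
is an involution: `ξ ≫ ξ = 𝟙`. -/
theorem stmt12 {C : Type*} [Category C] (T : C ⥤ C)
    (p : T ⟶ 𝟭 C) (z : 𝟭 C ⟶ T) (hz : z ≫ p = 𝟙 (𝟭 C))
    (X A B : C) (α : X ⟶ A) (β : X ⟶ B)
    -- the object of composable triples and the pregroupoid composition μ
    (D3 : TriplePullback α β α) (μ : D3.pt ⟶ X)
    (hμα : μ ≫ α = D3.p0 ≫ α) (hμβ : μ ≫ β = D3.p2 ≫ β)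
    (hid1 : ∀ {W : C} (m : W ⟶ D3.pt), m ≫ D3.p1 = m ≫ D3.p2 → m ≫ μ = m ≫ D3.p0)
    (hid2 : ∀ {W : C} (m : W ⟶ D3.pt), m ≫ D3.p0 = m ≫ D3.p1 → m ≫ μ = m ≫ D3.p2)
    (has1 : ∀ {W : C} (x y zz w : W ⟶ X) (e1 : x ≫ β = y ≫ β) (e2 : y ≫ β = zz ≫ β)
      (e3 : zz ≫ α = w ≫ α) (e4 : y ≫ α = (D3.lift y zz w e2 e3 ≫ μ) ≫ α),
      D3.lift x y (D3.lift y zz w e2 e3 ≫ μ) e1 e4 ≫ μ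
        = D3.lift x zz w (e1.trans e2) e3 ≫ μ)
    (has2 : ∀ {W : C} (x y zz w : W ⟶ X) (e1 : x ≫ β = y ≫ β) (e2 : y ≫ α = zz ≫ α)
      (e3 : zz ≫ α = w ≫ α) (e4 : (D3.lift x y zz e1 e2 ≫ μ) ≫ β = zz ≫ β),
      D3.lift (D3.lift x y zz e1 e2 ≫ μ) zz w e4 e3 ≫ μ
        = D3.lift x y w e1 (e2.trans e3) ≫ μ)
    -- T^α X = pullback of Tα along 0
    (TαX : C) (ια : TαX ⟶ T.obj X) (πα : TαX ⟶ A)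
    (hTα : IsPullback ια πα (T.map α) (z.app A))
    -- Q = X ×_β X ×_α T^α X
    (Q : TriplePullback α β πα)
    -- T preserves the triple pullback D3
    (hTD3 : ∀ {W : C} (a b c : W ⟶ T.obj X),
      a ≫ T.map β = b ≫ T.map β → b ≫ T.map α = c ≫ T.map α →
      ∃! k : W ⟶ T.obj D3.pt,
        k ≫ T.map D3.p0 = a ∧ k ≫ T.map D3.p1 = b ∧ k ≫ T.map D3.p2 = c)
    -- ξ = (π₁, π₀, (π₀0, π₁0, π₂ι^α) ≫ Tμ)
    (ξ : Q.pt ⟶ Q.pt)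
    (hξ0 : ξ ≫ Q.p0 = Q.p1) (hξ1 : ξ ≫ Q.p1 = Q.p0)
    (hξ2 : ∀ k : Q.pt ⟶ T.obj D3.pt,
      k ≫ T.map D3.p0 = Q.p0 ≫ z.app X →
      k ≫ T.map D3.p1 = Q.p1 ≫ z.app X →
      k ≫ T.map D3.p2 = Q.p2 ≫ ια →
      ξ ≫ Q.p2 ≫ ια = k ≫ T.map μ) :
    ξ ≫ ξ = 𝟙 Q.pt := by
  -- the canonical lift of (p0,p1,p2) is the identity
  have hℓ : D3.lift D3.p0 D3.p1 D3.p2 D3.w1 D3.w2 = 𝟙 D3.pt := by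
    apply D3.ext
    · rw [D3.lift_p0, Category.id_comp]
    · rw [D3.lift_p1, Category.id_comp]
    · rw [D3.lift_p2, Category.id_comp]
  have e4 : D3.p0 ≫ α = (D3.lift D3.p0 D3.p1 D3.p2 D3.w1 D3.w2 ≫ μ) ≫ α := by
    rw [hℓ, Category.id_comp, hμα]
  -- g = "inverse composition" arrow  g = (p1, p0, μ) with g ≫ μ = p2
  set g : D3.pt ⟶ D3.pt :=
    D3.lift D3.p1 D3.p0 (D3.lift D3.p0 D3.p1 D3.p2 D3.w1 D3.w2 ≫ μ) D3.w1.symm e4 with hg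
  have hg0 : g ≫ D3.p0 = D3.p1 := D3.lift_p0 _ _ _ _ _
  have hg1 : g ≫ D3.p1 = D3.p0 := D3.lift_p1 _ _ _ _ _
  have hg2 : g ≫ D3.p2 = μ := by
    rw [hg, D3.lift_p2, hℓ, Category.id_comp]
  have hgμ : g ≫ μ = D3.p2 := by
    rw [hg, has1 D3.p1 D3.p0 D3.p1 D3.p2 D3.w1.symm D3.w1 D3.w2 e4]
    have h01 : D3.lift D3.p1 D3.p1 D3.p2 (D3.w1.symm.trans D3.w1) D3.w2 ≫ D3.p0
        = D3.lift D3.p1 D3.p1 D3.p2 (D3.w1.symm.trans D3.w1) D3.w2 ≫ D3.p1 := by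
      rw [D3.lift_p0, D3.lift_p1]
    rw [hid2 _ h01, D3.lift_p2]
  -- naturality facts
  have natβ : z.app X ≫ T.map β = β ≫ z.app B := (z.naturality β).symm
  have natα : z.app X ≫ T.map α = α ≫ z.app A := (z.naturality α).symm
  have ha : (Q.p0 ≫ z.app X) ≫ T.map β = (Q.p1 ≫ z.app X) ≫ T.map β := by
    rw [Category.assoc, Category.assoc, natβ, ← Category.assoc, ← Category.assoc, Q.w1]
  have hb : (Q.p1 ≫ z.app X) ≫ T.map α = (Q.p2 ≫ ια) ≫ T.map α := by
    rw [Category.assoc, Category.assoc, natα, hTα.w, ← Category.assoc, ← Category.assoc, Q.w2]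
  obtain ⟨k₁, ⟨hk0, hk1, hk2⟩, -⟩ := hTD3 _ _ _ ha hb
  have step1 : ξ ≫ Q.p2 ≫ ια = k₁ ≫ T.map μ := hξ2 k₁ hk0 hk1 hk2
  -- k₁ ≫ Tμ composed with Tα
  have hb' : (Q.p0 ≫ z.app X) ≫ T.map α = (k₁ ≫ T.map μ) ≫ T.map α := by
    rw [← hk0]
    simp only [Category.assoc, ← T.map_comp, hμα]
  obtain ⟨k₂, -, hun⟩ := hTD3 _ _ _ ha.symm hb'
  have h1 : ξ ≫ k₁ = k₂ := by
    apply hun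
    refine ⟨?_, ?_, ?_⟩
    · rw [Category.assoc, hk0, ← Category.assoc, hξ0]
    · rw [Category.assoc, hk1, ← Category.assoc, hξ1]
    · rw [Category.assoc, hk2, step1]
  have h2 : k₁ ≫ T.map g = k₂ := by
    apply hun
    refine ⟨?_, ?_, ?_⟩
    · rw [Category.assoc, ← T.map_comp, hg0, hk1]
    · rw [Category.assoc, ← T.map_comp, hg1, hk0]
    · rw [Category.assoc, ← T.map_comp, hg2]
  have key : (ξ ≫ ξ) ≫ Q.p2 ≫ ια = Q.p2 ≫ ια := by
    calc (ξ ≫ ξ) ≫ Q.p2 ≫ ια = ξ ≫ (ξ ≫ Q.p2 ≫ ια) := by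
          simp only [Category.assoc]
      _ = ξ ≫ k₁ ≫ T.map μ := by rw [step1]
      _ = (ξ ≫ k₁) ≫ T.map μ := by rw [Category.assoc]
      _ = (k₁ ≫ T.map g) ≫ T.map μ := by rw [h1, h2]
      _ = k₁ ≫ T.map (g ≫ μ) := by rw [Category.assoc, ← T.map_comp]
      _ = k₁ ≫ T.map D3.p2 := by rw [hgμ]
      _ = Q.p2 ≫ ια := hk2
  apply Q.ext
  · rw [Category.assoc, hξ0, hξ1, Category.id_comp]
  · rw [Category.assoc, hξ1, hξ0, Category.id_comp]
  · apply hTα.hom_ext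
    · rw [Category.assoc, key, Category.id_comp]
    · have w2' : (ξ ≫ ξ) ≫ Q.p2 ≫ πα = Q.p2 ≫ πα := by
        rw [← Q.w2, ← Category.assoc, Category.assoc ξ ξ Q.p1, hξ1, hξ0]
      rw [Category.assoc, w2', Category.id_comp]
end

section
/- For a Lie group analogue in any category with T, p, 0 (0 ≫ p = id): taking the pregroupoid to be a group object G (with A = B = terminal object, α = β the unique map, and μ(x,y,z) = x y^{-1} z), the splitting theorem specializes to an isomorphism T G ≅ G × T_e G, where T_e G is the pullback of p : TG → G along the unit e : 1 → G. -/
/-!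
Since `T` preserves pullbacks and the terminal object, it preserves binary products, so `T G`
carries the multiplication `T m ∘ φ⁻¹`, with `φ : T (G × G) ≅ T G × T G` the comparison map; it is
associative with unit `T e`, and naturality makes `p : T G → G` and the zero section
`z : G → T G` multiplicative, with `z ≫ p = 𝟙`. The splitting is then that of a split
epimorphism of monoid objects with a group as base along its kernel `T_e G`:
`ξ ↦ (p ξ, z (p ξ)⁻¹ · ξ)` and `(g, v) ↦ z g · v` are mutually inverse.
-/

open CategoryTheory CategoryTheory.Limits

section ProductComparison

variable {C D : Type*} [Category C] [Category D] [HasBinaryProducts C] [HasBinaryProducts D]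

theorem isIso_prodComparison_of_isPullback [HasTerminal C] (F : C ⥤ D) {X Y : C}
    (hpb : IsPullback (F.map (prod.fst : X ⨯ Y ⟶ X)) (F.map prod.snd)
      (F.map (terminal.from X)) (F.map (terminal.from Y)))
    (hterm : IsTerminal (F.obj (⊤_ C))) :
    IsIso (prodComparison F X Y) :=
  ⟨hpb.lift prod.fst prod.snd (hterm.hom_ext _ _),
    hpb.hom_ext (by simp) (by simp), by ext <;> simp⟩

variable (F : C ⥤ D) [∀ A B : C, IsIso (prodComparison F A B)] {G : C}

noncomputable def CategoryTheory.Functor.mapMul (m : G ⨯ G ⟶ G) :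
    F.obj G ⨯ F.obj G ⟶ F.obj G :=
  CategoryTheory.inv (prodComparison F G G) ≫ F.map m

variable {F}

theorem lift_map_comp_inv_prodComparison {W A B : C} {X : D} (u : X ⟶ F.obj W)
    (f : W ⟶ A) (g : W ⟶ B) :
    prod.lift (u ≫ F.map f) (u ≫ F.map g) ≫ inv (prodComparison F A B) =
      u ≫ F.map (prod.lift f g) := by
  rw [IsIso.comp_inv_eq]
  ext <;> simp only [prod.lift_fst, prod.lift_snd, Category.assoc, prodComparison_fst,
    prodComparison_snd, ← Functor.map_comp]

theorem comp_map_lift_comp_eq_mapMul {W : C} {X : D} (m : G ⨯ G ⟶ G) (u : X ⟶ F.obj W)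
    (f g : W ⟶ G) :
    u ≫ F.map (prod.lift f g ≫ m) = prod.lift (u ≫ F.map f) (u ≫ F.map g) ≫ F.mapMul m := by
  rw [Functor.mapMul, reassoc_of% lift_map_comp_inv_prodComparison, F.map_comp]

theorem lift_mapMul_assoc {m : G ⨯ G ⟶ G}
    (hassoc : prod.map m (𝟙 G) ≫ m = (prod.associator G G G).hom ≫ prod.map (𝟙 G) m ≫ m)
    {X : D} (a b c : X ⟶ F.obj G) :
    prod.lift a (prod.lift b c ≫ F.mapMul m) ≫ F.mapMul m =
      prod.lift (prod.lift a b ≫ F.mapMul m) c ≫ F.mapMul m := by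
  -- `u` is the generalized point of `F ((G ⨯ G) ⨯ G)` with coordinates `a`, `b`, `c`.
  set u : X ⟶ F.obj ((G ⨯ G) ⨯ G) :=
    prod.lift (prod.lift a b ≫ CategoryTheory.inv (prodComparison F G G)) c ≫
      CategoryTheory.inv (prodComparison F (G ⨯ G) G)
  obtain ⟨ha, hb, hc⟩ : a = u ≫ F.map (prod.fst ≫ prod.fst) ∧
      b = u ≫ F.map (prod.fst ≫ prod.snd) ∧ c = u ≫ F.map prod.snd := by
    refine ⟨?_, ?_, ?_⟩ <;>
    simp only [u, F.map_comp, Category.assoc, inv_prodComparison_map_fst_assoc,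
      inv_prodComparison_map_fst, inv_prodComparison_map_snd, prod.lift_fst_assoc, prod.lift_fst,
      prod.lift_snd]
  have hassoc' :
      prod.lift (prod.fst ≫ prod.fst) (prod.lift (prod.fst ≫ prod.snd) prod.snd ≫ m) ≫ m =
        prod.lift (prod.lift (prod.fst ≫ prod.fst) (prod.fst ≫ prod.snd) ≫ m)
          (prod.snd : (G ⨯ G) ⨯ G ⟶ G) ≫ m := by
    have hleft : prod.lift (prod.fst ≫ prod.fst) (prod.lift (prod.fst ≫ prod.snd) prod.snd ≫ m) =
        (prod.associator G G G).hom ≫ prod.map (𝟙 G) m := by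
      ext <;> simp [prod.lift_fst, prod.lift_snd]
    have hright : prod.lift (prod.lift (prod.fst ≫ prod.fst) (prod.fst ≫ prod.snd) ≫ m)
        prod.snd = prod.map m (𝟙 G) := by
      have hfst : prod.lift (prod.fst ≫ prod.fst) (prod.fst ≫ prod.snd) =
          (prod.fst : (G ⨯ G) ⨯ G ⟶ G ⨯ G) := by
        ext <;> simp [prod.lift_fst, prod.lift_snd]
      rw [hfst]
      ext <;> simp [prod.lift_fst, prod.lift_snd]
    rw [hleft, hright, Category.assoc, hassoc]
  rw [ha, hb, hc, ← comp_map_lift_comp_eq_mapMul, ← comp_map_lift_comp_eq_mapMul,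
    ← comp_map_lift_comp_eq_mapMul, ← comp_map_lift_comp_eq_mapMul, hassoc']

theorem lift_comp_map_mapMul_eq_self [HasTerminal C] {m : G ⨯ G ⟶ G} {e : ⊤_ C ⟶ G}
    (hunit : prod.lift (terminal.from G ≫ e) (𝟙 G) ≫ m = 𝟙 G)
    (hterm : IsTerminal (F.obj (⊤_ C))) {X : D} (u : X ⟶ F.obj (⊤_ C)) (a : X ⟶ F.obj G) :
    prod.lift (u ≫ F.map e) a ≫ F.mapMul m = a := by
  have hu : u = a ≫ F.map (terminal.from G) := hterm.hom_ext _ _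
  calc prod.lift (u ≫ F.map e) a ≫ F.mapMul m
      = prod.lift (a ≫ F.map (terminal.from G ≫ e)) (a ≫ F.map (𝟙 G)) ≫ F.mapMul m := by
        rw [hu, F.map_comp, F.map_id, Category.comp_id, Category.assoc]
    _ = a := by rw [← comp_map_lift_comp_eq_mapMul, hunit, F.map_id, Category.comp_id]

theorem lift_mapMul_comp_app {F' : C ⥤ D} [∀ A B : C, IsIso (prodComparison F' A B)]
    (α : F ⟶ F') (m : G ⨯ G ⟶ G) {X : D} (a b : X ⟶ F.obj G) :
    prod.lift a b ≫ F.mapMul m ≫ α.app G =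
      prod.lift (a ≫ α.app G) (b ≫ α.app G) ≫ F'.mapMul m := by
  have h : CategoryTheory.inv (prodComparison F G G) ≫ α.app (G ⨯ G) =
      prod.map (α.app G) (α.app G) ≫ CategoryTheory.inv (prodComparison F' G G) := by
    rw [IsIso.inv_comp_eq, ← Category.assoc, IsIso.eq_comp_inv,
      prodComparison_natural_of_natTrans]
  rw [Functor.mapMul, Functor.mapMul, Category.assoc, α.naturality, reassoc_of% h,
    prod.lift_map_assoc]

end ProductComparison

theorem CategoryTheory.Functor.id_mapMul {C : Type*} [Category C] [HasBinaryProducts C] {G : C}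
    (m : G ⨯ G ⟶ G) : (𝟭 C).mapMul m = m := by
  have : prodComparison (𝟭 C) G G = 𝟙 _ := by ext <;> simp [prodComparison]
  simp [Functor.mapMul, this]

section Splitting

variable {C : Type*} [Category C] [HasTerminal C] [HasBinaryProducts C] {G H : C}
  {m : G ⨯ G ⟶ G} {e : ⊤_ C ⟶ G} {i : G ⟶ G} {mH : H ⨯ H ⟶ H} {p : H ⟶ G} {z : G ⟶ H}

theorem lift_comp_mul_eq_of_lift_mul {f g : G ⟶ G} {c : ⊤_ C ⟶ G}
    (h : prod.lift f g ≫ m = terminal.from G ≫ c) {X : C} (a : X ⟶ G) :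
    prod.lift (a ≫ f) (a ≫ g) ≫ m = terminal.from X ≫ c := by
  rw [← prod.comp_lift_assoc, h, ← Category.assoc, terminal.comp_from]

theorem lift_comp_lift_comp_mul_eq_self
    (hassocH : ∀ {X : C} (a b c : X ⟶ H),
      prod.lift a (prod.lift b c ≫ mH) ≫ mH = prod.lift (prod.lift a b ≫ mH) c ≫ mH)
    (hunitH : ∀ {X : C} (a : X ⟶ H), prod.lift (terminal.from X ≫ e ≫ z) a ≫ mH = a)
    (hz : ∀ {X : C} (a b : X ⟶ G), prod.lift (a ≫ z) (b ≫ z) ≫ mH = prod.lift a b ≫ m ≫ z)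
    {X : C} {a b : X ⟶ G} (hab : prod.lift a b ≫ m = terminal.from X ≫ e) (v : X ⟶ H) :
    prod.lift (a ≫ z) (prod.lift (b ≫ z) v ≫ mH) ≫ mH = v := by
  rw [hassocH, hz, reassoc_of% hab, hunitH]

theorem lift_inv_mul_comp_eq_unit
    (hp : ∀ {X : C} (a b : X ⟶ H), prod.lift a b ≫ mH ≫ p = prod.lift (a ≫ p) (b ≫ p) ≫ m)
    (hzp : z ≫ p = 𝟙 G) (hinvL : prod.lift i (𝟙 G) ≫ m = terminal.from G ≫ e) :
    (prod.lift (p ≫ i ≫ z) (𝟙 H) ≫ mH) ≫ p = terminal.from H ≫ e := by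
  rw [Category.assoc, hp, Category.assoc, Category.assoc, hzp, Category.comp_id,
    Category.id_comp]
  simpa using lift_comp_mul_eq_of_lift_mul hinvL p

theorem nonempty_iso_prod_of_isPullback {K : C} {ι : K ⟶ H} {π : K ⟶ ⊤_ C}
    (hassocH : ∀ {X : C} (a b c : X ⟶ H),
      prod.lift a (prod.lift b c ≫ mH) ≫ mH = prod.lift (prod.lift a b ≫ mH) c ≫ mH)
    (hunitH : ∀ {X : C} (a : X ⟶ H), prod.lift (terminal.from X ≫ e ≫ z) a ≫ mH = a)
    (hp : ∀ {X : C} (a b : X ⟶ H), prod.lift a b ≫ mH ≫ p = prod.lift (a ≫ p) (b ≫ p) ≫ m)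
    (hz : ∀ {X : C} (a b : X ⟶ G), prod.lift (a ≫ z) (b ≫ z) ≫ mH = prod.lift a b ≫ m ≫ z)
    (hzp : z ≫ p = 𝟙 G)
    (hunitR : prod.lift (𝟙 G) (terminal.from G ≫ e) ≫ m = 𝟙 G)
    (hinvL : prod.lift i (𝟙 G) ≫ m = terminal.from G ≫ e)
    (hinvR : prod.lift (𝟙 G) i ≫ m = terminal.from G ≫ e)
    (hK : IsPullback ι π p e) :
    Nonempty (H ≅ G ⨯ K) := by
  set s : H ⟶ K := hK.lift _ _ (lift_inv_mul_comp_eq_unit hp hzp hinvL)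
  have hs : s ≫ ι = prod.lift (p ≫ i ≫ z) (𝟙 H) ≫ mH := hK.lift_fst ..
  set ψ : G ⨯ K ⟶ H := prod.lift (prod.fst ≫ z) (prod.snd ≫ ι) ≫ mH
  have hψp : ψ ≫ p = prod.fst := by
    have hπ : prod.snd ≫ π = (prod.fst : G ⨯ K ⟶ G) ≫ terminal.from G :=
      terminalIsTerminal.hom_ext _ _
    calc ψ ≫ p = prod.lift (prod.fst ≫ z ≫ p) (prod.snd ≫ ι ≫ p) ≫ m := by
          simp only [ψ, Category.assoc, hp]
      _ = prod.fst ≫ prod.lift (𝟙 G) (terminal.from G ≫ e) ≫ m := by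
          rw [hzp, hK.w, reassoc_of% hπ, prod.comp_lift_assoc, Category.comp_id]
      _ = prod.fst := by rw [hunitR, Category.comp_id]
  refine ⟨⟨prod.lift p s, ψ, ?_, ?_⟩⟩
  · have hpi : prod.lift (p ≫ 𝟙 G) (p ≫ i) ≫ m = terminal.from H ≫ e :=
      lift_comp_mul_eq_of_lift_mul hinvR p
    rw [Category.comp_id] at hpi
    rw [prod.comp_lift_assoc, prod.lift_fst_assoc, prod.lift_snd_assoc, hs, ← Category.assoc p i,
      lift_comp_lift_comp_mul_eq_self hassocH hunitH hz hpi]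
  · ext
    · rw [Category.assoc, prod.lift_fst, hψp, Category.id_comp]
    · refine hK.hom_ext ?_ (terminalIsTerminal.hom_ext _ _)
      have hig : prod.lift (prod.fst ≫ i) (prod.fst ≫ 𝟙 G) ≫ m = terminal.from (G ⨯ K) ≫ e :=
        lift_comp_mul_eq_of_lift_mul hinvL prod.fst
      rw [Category.comp_id] at hig
      rw [Category.assoc, Category.assoc, prod.lift_snd_assoc, hs, prod.comp_lift_assoc,
        Category.comp_id, reassoc_of% hψp, ← Category.assoc prod.fst i,
        lift_comp_lift_comp_mul_eq_self hassocH hunitH hz hig, Category.id_comp]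

end Splitting

/-- For a group object `G` in a category `𝕏` with an endofunctor `T`,
`p : T ⟹ 𝟭`, `0 : 𝟭 ⟹ T`, `0 ≫ p = 𝟙`, where `T` preserves the relevant pullbacks and
the terminal object, the splitting theorem specializes to `T G ≅ G × T_e G`, where
`T_e G` is the pullback of `p : TG ⟶ G` along the unit `e : ⊤ ⟶ G`. -/
theorem stmt17 {C : Type*} [Category C] [HasTerminal C] [HasBinaryProducts C]
    (T : C ⥤ C) (p : T ⟶ 𝟭 C) (z : 𝟭 C ⟶ T) (hz : z ≫ p = 𝟙 (𝟭 C))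
    -- T preserves pullbacks and the terminal object
    (hTpb : ∀ {P Y Z W : C} (f1 : P ⟶ Y) (f2 : P ⟶ Z) (g1 : Y ⟶ W) (g2 : Z ⟶ W),
      IsPullback f1 f2 g1 g2 → IsPullback (T.map f1) (T.map f2) (T.map g1) (T.map g2))
    (hTterm : IsTerminal (T.obj (⊤_ C)))
    -- a group object G in C
    (G : C) (m : G ⨯ G ⟶ G) (e : ⊤_ C ⟶ G) (i : G ⟶ G)
    (hassoc : prod.map m (𝟙 G) ≫ m = (prod.associator G G G).hom ≫ prod.map (𝟙 G) m ≫ m)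
    (hunitL : prod.lift (terminal.from G ≫ e) (𝟙 G) ≫ m = 𝟙 G)
    (hunitR : prod.lift (𝟙 G) (terminal.from G ≫ e) ≫ m = 𝟙 G)
    (hinvL : prod.lift i (𝟙 G) ≫ m = terminal.from G ≫ e)
    (hinvR : prod.lift (𝟙 G) i ≫ m = terminal.from G ≫ e)
    -- T_e G = the pullback of p : TG ⟶ G along e
    (TeG : C) (ιe : TeG ⟶ T.obj G) (πe : TeG ⟶ ⊤_ C)
    (hTe : IsPullback ιe πe (p.app G) e) :
    Nonempty (T.obj G ≅ G ⨯ TeG) := by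
  have : ∀ X Y : C, IsIso (prodComparison T X Y) := fun X Y =>
    isIso_prodComparison_of_isPullback T (hTpb _ _ _ _ (.of_hasBinaryProduct' X Y)) hTterm
  have hze : e ≫ z.app G = z.app (⊤_ C) ≫ T.map e := z.naturality e
  refine nonempty_iso_prod_of_isPullback (lift_mapMul_assoc hassoc) (fun a => ?_)
    (fun a b => ?_) (fun a b => ?_) (NatTrans.congr_app hz G) hunitR hinvL hinvR hTe
  · rw [hze, ← Category.assoc, lift_comp_map_mapMul_eq_self hunitL hTterm]
  · exact (lift_mapMul_comp_app p m a b).trans (by rw [Functor.id_mapMul]; rfl)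
  · exact (lift_mapMul_comp_app z m a b).symm.trans (by rw [Functor.id_mapMul]; rfl)
end
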